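/- arXiv:2410.12684 — 5 statements merged into one kernel-verified Lean document; each statement's English description precedes it below -/
import Mathlib

section
/- Let ε ∈ (0,1]. For every d×d Hermitian matrix M with operator norm ‖M‖ ≤ 1 and all unit vectors ψ, φ ∈ ℂ^d, one has |Tr[M |ψ⟩⟨ψ| M |φ⟩⟨φ|] − Tr[M_ε |ψ⟩⟨ψ| M_ε |φ⟩⟨φ|]| ≤ ε/2; equivalently, ||⟨φ|M|ψ⟩|² − |⟨φ|M_ε|ψ⟩|²| ≤ ε/2. -/
/-!
In an eigenbasis of `M`, with `x`, `y` the coordinates of `φ`, `ψ`, the amplitude `⟨φ|M|ψ⟩`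
splits as `b + c`, where `b = ⟨φ|M_ε|ψ⟩` collects the eigenvalues with `|λ| ≥ ε/2` and `c` the
others. Since `‖M‖ ≤ 1`, `|b| ≤ s := ∑_{kept} |xᵢ||yᵢ|` and `|c| ≤ (ε/2) q` with `q` the
complementary sum, and `s + q ≤ 1` by Cauchy–Schwarz. Hence
`||b + c|² - |b|²| ≤ |c| (2|b| + |c|) ≤ (ε/2) q (2(1 - q) + q) ≤ ε/2`.
The trace form is the same quantity: `Tr[A|ψ⟩⟨ψ|A|φ⟩⟨φ|] = |⟨φ|A|ψ⟩|²` for Hermitian `A`.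
-/

open Matrix

noncomputable section

/-- The rank-one orthogonal projection `|ψ⟩⟨ψ|` associated to a vector `ψ ∈ ℂ^d`. -/
def ketbra {d : ℕ} (ψ : EuclideanSpace ℂ (Fin d)) : Matrix (Fin d) (Fin d) ℂ :=
  Matrix.vecMulVec ψ (star (ψ : Fin d → ℂ))

/-- `⟨φ|M|ψ⟩`, the standard inner product of `φ` with `Mψ`. -/
def braM {d : ℕ} (φ : EuclideanSpace ℂ (Fin d)) (M : Matrix (Fin d) (Fin d) ℂ)
    (ψ : EuclideanSpace ℂ (Fin d)) : ℂ :=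
  star (φ : Fin d → ℂ) ⬝ᵥ M.mulVec ψ

/-- The orthogonal projection `P_ε` onto the direct sum of the eigenspaces of the
Hermitian matrix `M` whose eigenvalue has absolute value at least `ε/2`. -/
def specProj {d : ℕ} (M : Matrix (Fin d) (Fin d) ℂ) (hM : M.IsHermitian) (ε : ℝ) :
    Matrix (Fin d) (Fin d) ℂ :=
  (hM.eigenvectorUnitary : Matrix (Fin d) (Fin d) ℂ) *
    Matrix.diagonal (fun i => if ε / 2 ≤ |hM.eigenvalues i| then (1 : ℂ) else 0) *
    (hM.eigenvectorUnitary : Matrix (Fin d) (Fin d) ℂ)ᴴ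

/-- The spectral truncation `M_ε := P_ε M P_ε`. -/
def truncation {d : ℕ} (M : Matrix (Fin d) (Fin d) ℂ) (hM : M.IsHermitian) (ε : ℝ) :
    Matrix (Fin d) (Fin d) ℂ :=
  specProj M hM ε * M * specProj M hM ε

lemma abs_norm_add_sq_sub_norm_sq_le {E : Type*} [SeminormedAddCommGroup E] (u v : E) :
    |‖u + v‖ ^ 2 - ‖u‖ ^ 2| ≤ ‖v‖ * (2 * ‖u‖ + ‖v‖) := by
  have h₁ : ‖u + v‖ ≤ ‖u‖ + ‖v‖ := norm_add_le u v
  have h₂ : ‖u‖ ≤ ‖u + v‖ + ‖v‖ := by simpa using norm_sub_le (u + v) v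
  rw [abs_le]
  constructor <;> nlinarith [norm_nonneg u, norm_nonneg v, norm_nonneg (u + v)]

lemma mul_two_mul_add_le_of_add_le_one {b c s q t : ℝ} (hb : 0 ≤ b) (hc : 0 ≤ c) (hbs : b ≤ s)
    (hct : c ≤ t * q) (hq : 0 ≤ q) (hsq : s + q ≤ 1) (ht₀ : 0 ≤ t) (ht₁ : t ≤ 1) :
    c * (2 * b + c) ≤ t := by
  calc c * (2 * b + c) ≤ t * q * (2 * s + t * q) := by gcongr
    _ ≤ t * q * (2 * (1 - q) + q) := by gcongr <;> nlinarith
    _ = t * (1 - (1 - q) ^ 2) := by ring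
    _ ≤ t := by nlinarith [sq_nonneg (1 - q)]

theorem EuclideanSpace.sum_norm_mul_norm_le {𝕜 ι : Type*} [RCLike 𝕜] [Fintype ι]
    (x y : EuclideanSpace 𝕜 ι) : ∑ i, ‖x i‖ * ‖y i‖ ≤ ‖x‖ * ‖y‖ := by
  simpa only [EuclideanSpace.norm_eq] using
    Real.sum_mul_le_sqrt_mul_sqrt Finset.univ (‖x ·‖) (‖y ·‖)

theorem abs_norm_sum_sq_sub_norm_sum_sq_le {𝕜 ι : Type*} [RCLike 𝕜] [Fintype ι]
    {x y : EuclideanSpace 𝕜 ι} (hx : ‖x‖ ≤ 1) (hy : ‖y‖ ≤ 1) (μ : ι → 𝕜) (S : Finset ι) {t : ℝ}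
    (ht₀ : 0 ≤ t) (ht₁ : t ≤ 1) (hμS : ∀ i ∈ S, ‖μ i‖ ≤ 1) (hμSc : ∀ i ∉ S, ‖μ i‖ ≤ t) :
    |‖∑ i, μ i * star (x i) * y i‖ ^ 2 - ‖∑ i ∈ S, μ i * star (x i) * y i‖ ^ 2| ≤ t := by
  classical
  set w : ι → 𝕜 := fun i => μ i * star (x i) * y i
  have hw : ∀ i, ‖w i‖ = ‖μ i‖ * (‖x i‖ * ‖y i‖) := fun i => by
    simp only [w, norm_mul, norm_star, mul_assoc]
  set s := ∑ i ∈ S, ‖x i‖ * ‖y i‖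
  set q := ∑ i ∈ Sᶜ, ‖x i‖ * ‖y i‖
  have hsq : s + q ≤ 1 := by
    rw [Finset.sum_add_sum_compl]
    exact (EuclideanSpace.sum_norm_mul_norm_le x y).trans (mul_le_one₀ hx (norm_nonneg y) hy)
  have hb : ‖∑ i ∈ S, w i‖ ≤ s := norm_sum_le_of_le S fun i hi => by
    rw [hw]
    exact mul_le_of_le_one_left (by positivity) (hμS i hi)
  have hc : ‖∑ i ∈ Sᶜ, w i‖ ≤ t * q := by
    rw [Finset.mul_sum]
    refine norm_sum_le_of_le Sᶜ fun i hi => ?_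
    rw [hw]
    exact mul_le_mul_of_nonneg_right (hμSc i (Finset.mem_compl.mp hi)) (by positivity)
  rw [← Finset.sum_add_sum_compl S w]
  exact (abs_norm_add_sq_sub_norm_sq_le _ _).trans
    (mul_two_mul_add_le_of_add_le_one (norm_nonneg _) (norm_nonneg _) hb hc
      (Finset.sum_nonneg fun i _ => by positivity) hsq ht₀ ht₁)

theorem Matrix.IsHermitian.abs_eigenvalues_le_norm_toEuclideanCLM {𝕜 n : Type*} [RCLike 𝕜]
    [Fintype n] [DecidableEq n] {A : Matrix n n 𝕜} (hA : A.IsHermitian) (i : n) :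
    |hA.eigenvalues i| ≤ ‖toEuclideanCLM (n := n) (𝕜 := 𝕜) A‖ := by
  set T := toEuclideanCLM (n := n) (𝕜 := 𝕜) A
  set v := hA.eigenvectorBasis i
  have hv : ‖v‖ = 1 := hA.eigenvectorBasis.orthonormal.1 i
  have hTv : T v = (hA.eigenvalues i : 𝕜) • v := by
    apply WithLp.ofLp_injective 2
    rw [ofLp_toEuclideanCLM, WithLp.ofLp_smul, hA.mulVec_eigenvectorBasis,
      RCLike.real_smul_eq_coe_smul (K := 𝕜)]
  calc |hA.eigenvalues i| = ‖T v‖ := by rw [hTv, norm_smul, hv, mul_one, RCLike.norm_ofReal]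
    _ ≤ ‖T‖ * ‖v‖ := T.le_opNorm v
    _ = ‖T‖ := by rw [hv, mul_one]

theorem Matrix.IsHermitian.star_eigenvectorUnitary_mulVec_eq_repr {𝕜 n : Type*} [RCLike 𝕜]
    [Fintype n] [DecidableEq n] {A : Matrix n n 𝕜} (hA : A.IsHermitian) (v : EuclideanSpace 𝕜 n) :
    star (hA.eigenvectorUnitary : Matrix n n 𝕜) *ᵥ (v : n → 𝕜) =
      (hA.eigenvectorBasis.repr v : n → 𝕜) := by
  ext i
  simp [mulVec, dotProduct, OrthonormalBasis.repr_apply_apply,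
    EuclideanSpace.inner_eq_star_dotProduct, mul_comm]

lemma trace_mul_ketbra_mul_mul_ketbra {d : ℕ} (A B : Matrix (Fin d) (Fin d) ℂ)
    (ψ φ : EuclideanSpace ℂ (Fin d)) :
    trace (A * ketbra ψ * B * ketbra φ) = braM ψ B φ * braM φ A ψ := by
  rw [ketbra, ketbra, mul_vecMulVec A, vecMulVec_mul, vecMulVec_mul_vecMulVec, trace_vecMulVec,
    dotProduct_smul, smul_eq_mul, braM, braM, ← dotProduct_mulVec, dotProduct_comm (A *ᵥ _)]

lemma braM_swap_of_isHermitian {d : ℕ} {A : Matrix (Fin d) (Fin d) ℂ} (hA : A.IsHermitian)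
    (ψ φ : EuclideanSpace ℂ (Fin d)) : braM ψ A φ = star (braM φ A ψ) := by
  rw [braM, braM, star_dotProduct, star_mulVec, ← dotProduct_mulVec, hA.eq]

lemma trace_mul_ketbra_mul_mul_ketbra_of_isHermitian {d : ℕ} {A : Matrix (Fin d) (Fin d) ℂ}
    (hA : A.IsHermitian) (ψ φ : EuclideanSpace ℂ (Fin d)) :
    trace (A * ketbra ψ * A * ketbra φ) = ((‖braM φ A ψ‖ ^ 2 : ℝ) : ℂ) := by
  rw [trace_mul_ketbra_mul_mul_ketbra, braM_swap_of_isHermitian hA, Complex.star_def,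
    Complex.conj_mul', Complex.ofReal_pow]

lemma braM_conjStarAlgAut_eigenvectorUnitary_diagonal {d : ℕ} {A : Matrix (Fin d) (Fin d) ℂ}
    (hA : A.IsHermitian) (f : Fin d → ℂ) (φ ψ : EuclideanSpace ℂ (Fin d)) :
    braM φ (Unitary.conjStarAlgAut ℂ _ hA.eigenvectorUnitary (diagonal f)) ψ =
      ∑ i, f i * star (hA.eigenvectorBasis.repr φ i) * hA.eigenvectorBasis.repr ψ i := by
  have hU : star (φ : Fin d → ℂ) ᵥ* (hA.eigenvectorUnitary : Matrix (Fin d) (Fin d) ℂ) =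
      star (hA.eigenvectorBasis.repr φ : Fin d → ℂ) := by
    rw [← hA.star_eigenvectorUnitary_mulVec_eq_repr, star_mulVec, star_eq_conjTranspose,
      conjTranspose_conjTranspose]
  rw [Unitary.conjStarAlgAut_apply, braM, ← mulVec_mulVec, ← mulVec_mulVec, dotProduct_mulVec,
    hU, hA.star_eigenvectorUnitary_mulVec_eq_repr]
  simp only [dotProduct, mulVec_diagonal, Pi.star_apply]
  exact Finset.sum_congr rfl fun i _ => by ring

lemma braM_eq_sum_eigenvalues {d : ℕ} {M : Matrix (Fin d) (Fin d) ℂ} (hM : M.IsHermitian)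
    (φ ψ : EuclideanSpace ℂ (Fin d)) :
    braM φ M ψ = ∑ i, (hM.eigenvalues i : ℂ) * star (hM.eigenvectorBasis.repr φ i) *
      hM.eigenvectorBasis.repr ψ i := by
  conv_lhs => rw [hM.spectral_theorem]
  exact braM_conjStarAlgAut_eigenvectorUnitary_diagonal hM _ φ ψ

section Truncation

variable {d : ℕ} (M : Matrix (Fin d) (Fin d) ℂ) (hM : M.IsHermitian) (ε : ℝ)

lemma specProj_eq_conjStarAlgAut :
    specProj M hM ε = Unitary.conjStarAlgAut ℂ _ hM.eigenvectorUnitary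
      (diagonal fun i => if ε / 2 ≤ |hM.eigenvalues i| then 1 else 0) := by
  rw [Unitary.conjStarAlgAut_apply, specProj, star_eq_conjTranspose]

lemma truncation_eq_conjStarAlgAut :
    truncation M hM ε = Unitary.conjStarAlgAut ℂ _ hM.eigenvectorUnitary
      (diagonal fun i => if ε / 2 ≤ |hM.eigenvalues i| then (hM.eigenvalues i : ℂ) else 0) := by
  have hdiag :
      (diagonal fun i => if ε / 2 ≤ |hM.eigenvalues i| then (hM.eigenvalues i : ℂ) else 0) =
        diagonal (fun i => if ε / 2 ≤ |hM.eigenvalues i| then 1 else 0) *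
          diagonal (RCLike.ofReal ∘ hM.eigenvalues) *
          diagonal (fun i => if ε / 2 ≤ |hM.eigenvalues i| then 1 else 0) := by
    rw [diagonal_mul_diagonal, diagonal_mul_diagonal]
    congr 1
    funext i
    split_ifs <;> simp
  rw [hdiag, map_mul, map_mul, ← hM.spectral_theorem, ← specProj_eq_conjStarAlgAut, truncation]

lemma truncation_isHermitian : (truncation M hM ε).IsHermitian := by
  rw [truncation_eq_conjStarAlgAut, Unitary.conjStarAlgAut_apply, star_eq_conjTranspose]
  refine isHermitian_mul_mul_conjTranspose _ (isHermitian_diagonal_of_self_adjoint _ ?_)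
  ext i
  split_ifs with h <;> simp [h]

lemma braM_truncation_eq_sum_eigenvalues (φ ψ : EuclideanSpace ℂ (Fin d)) :
    braM φ (truncation M hM ε) ψ =
      ∑ i ∈ Finset.univ.filter (fun i => ε / 2 ≤ |hM.eigenvalues i|),
        (hM.eigenvalues i : ℂ) * star (hM.eigenvectorBasis.repr φ i) *
          hM.eigenvectorBasis.repr ψ i := by
  rw [truncation_eq_conjStarAlgAut, braM_conjStarAlgAut_eigenvectorUnitary_diagonal,
    Finset.sum_filter]
  exact Finset.sum_congr rfl fun i _ => by split_ifs <;> simp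

end Truncation

/-- For `ε ∈ (0,1]`, a Hermitian `M` with operator norm at most `1`,
and unit vectors `ψ, φ`, we have
`|Tr[M|ψ⟩⟨ψ|M|φ⟩⟨φ|] − Tr[M_ε|ψ⟩⟨ψ|M_ε|φ⟩⟨φ|]| ≤ ε/2`, equivalently
`||⟨φ|M|ψ⟩|² − |⟨φ|M_ε|ψ⟩|²| ≤ ε/2`. -/
theorem truncation_trace_close {d : ℕ} (ε : ℝ) (hε0 : 0 < ε) (hε1 : ε ≤ 1)
    (M : Matrix (Fin d) (Fin d) ℂ) (hM : M.IsHermitian)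
    (hMnorm : ‖Matrix.toEuclideanCLM (𝕜 := ℂ) M‖ ≤ 1)
    (ψ φ : EuclideanSpace ℂ (Fin d)) (hψ : ‖ψ‖ = 1) (hφ : ‖φ‖ = 1) :
    ‖(Matrix.trace (M * ketbra ψ * M * ketbra φ) -
          Matrix.trace (truncation M hM ε * ketbra ψ * truncation M hM ε * ketbra φ))‖ ≤
      ε / 2 ∧
    |‖braM φ M ψ‖ ^ 2 - ‖braM φ (truncation M hM ε) ψ‖ ^ 2| ≤
      ε / 2 := by
  have heig : ∀ i, ‖(hM.eigenvalues i : ℂ)‖ ≤ 1 := fun i => by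
    simpa using (hM.abs_eigenvalues_le_norm_toEuclideanCLM i).trans hMnorm
  have hamp : |‖braM φ M ψ‖ ^ 2 - ‖braM φ (truncation M hM ε) ψ‖ ^ 2| ≤ ε / 2 := by
    rw [braM_eq_sum_eigenvalues, braM_truncation_eq_sum_eigenvalues]
    refine abs_norm_sum_sq_sub_norm_sum_sq_le (by simp [hφ]) (by simp [hψ]) _ _ (by positivity)
      (by linarith) (fun i _ => heig i) fun i hi => ?_
    simp only [Finset.mem_filter, Finset.mem_univ, true_and, not_le] at hi
    simpa using hi.le
  refine ⟨?_, hamp⟩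
  rw [trace_mul_ketbra_mul_mul_ketbra_of_isHermitian hM,
    trace_mul_ketbra_mul_mul_ketbra_of_isHermitian (truncation_isHermitian M hM ε),
    ← Complex.ofReal_sub, Complex.norm_real, Real.norm_eq_abs]
  exact hamp
end
end

section
/- Let ε ∈ (0,1]. For every d×d Hermitian matrix M with operator norm ‖M‖ ≤ 1, the operator norm of the Kronecker-product difference satisfies ‖M ⊗ Mᵀ − M_ε ⊗ M_εᵀ‖ ≤ ε/2. -/
/-!
Diagonalize `M = U D Uᴴ` with `D = diag(λ)`, and let `t` be hard thresholding at `ε/2`. Then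
`M_ε = U t(D) Uᴴ`, and the unitary `U ⊗ Ū` simultaneously diagonalizes `M ⊗ Mᵀ` and
`M_ε ⊗ M_εᵀ`, so the difference has operator norm `maxᵢⱼ |λᵢλⱼ - t(λᵢ)t(λⱼ)|`. This vanishes
when both eigenvalues survive the threshold; otherwise it is `|λᵢ||λⱼ|` with one factor below
`ε/2` and the other at most `‖M‖ ≤ 1`.
-/

open Matrix
open scoped Kronecker Matrix.Norms.L2Operator

noncomputable section

def hardThreshold (t x : ℝ) : ℝ :=
  if t ≤ |x| then x else 0

lemma hardThreshold_of_lt {t x : ℝ} (h : |x| < t) : hardThreshold t x = 0 :=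
  if_neg h.not_ge

lemma abs_mul_sub_hardThreshold_mul_le {t a b : ℝ} (ht : 0 ≤ t) (ha : |a| ≤ 1) (hb : |b| ≤ 1) :
    |a * b - hardThreshold t a * hardThreshold t b| ≤ t := by
  by_cases hta : t ≤ |a|
  · by_cases htb : t ≤ |b|
    · simp [hardThreshold, hta, htb, ht]
    · rw [hardThreshold_of_lt (not_le.mp htb), mul_zero, sub_zero, abs_mul]
      nlinarith [abs_nonneg a, abs_nonneg b]
  · rw [hardThreshold_of_lt (not_le.mp hta), zero_mul, sub_zero, abs_mul]
    nlinarith [abs_nonneg a, abs_nonneg b]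

lemma CStarRing.norm_coe_unitary_mul_star {E : Type*} [NormedRing E] [StarRing E] [CStarRing E]
    (U : unitary E) (A : E) : ‖(U : E) * A * star (U : E)‖ = ‖A‖ := by
  rw [← Unitary.coe_star, CStarRing.norm_mul_coe_unitary, CStarRing.norm_coe_unitary_mul]

namespace Matrix

variable {n R : Type*} [Fintype n]

lemma conj_kronecker_transpose_conj [CommSemiring R] [StarRing R] (U A B : Matrix n n R) :
    (U * A * Uᴴ) ⊗ₖ (U * B * Uᴴ)ᵀ = (U ⊗ₖ U.map star) * (A ⊗ₖ Bᵀ) * (U ⊗ₖ U.map star)ᴴ := by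
  rw [transpose_mul, transpose_mul, ← mul_assoc, mul_kronecker_mul, mul_kronecker_mul,
    conjTranspose_kronecker, ← conjTranspose_transpose,
    conjTranspose_transpose_eq_transpose_conjTranspose, conjTranspose_conjTranspose]

lemma conj_diagonal_kronecker_transpose_sub [DecidableEq n] [CommRing R] [StarRing R]
    (U : Matrix n n R) (a b : n → R) :
    (U * diagonal a * Uᴴ) ⊗ₖ (U * diagonal a * Uᴴ)ᵀ -
        (U * diagonal b * Uᴴ) ⊗ₖ (U * diagonal b * Uᴴ)ᵀ =
      (U ⊗ₖ U.map star) * diagonal (fun p => a p.1 * a p.2 - b p.1 * b p.2) *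
        (U ⊗ₖ U.map star)ᴴ := by
  rw [conj_kronecker_transpose_conj, conj_kronecker_transpose_conj, ← sub_mul, ← mul_sub,
    diagonal_transpose, diagonal_transpose, diagonal_kronecker_diagonal,
    diagonal_kronecker_diagonal, ← diagonal_sub]

lemma kronecker_map_star_mem_unitary [DecidableEq n] [CommRing R] [StarRing R] {U : Matrix n n R}
    (hU : U ∈ unitary (Matrix n n R)) : U ⊗ₖ U.map star ∈ unitary (Matrix (n × n) (n × n) R) :=
  kronecker_mem_unitary hU (map_star_mem_unitaryGroup_iff.mpr hU)

namespace IsHermitian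

variable [DecidableEq n] {M : Matrix n n ℂ} (hM : M.IsHermitian)

lemma abs_eigenvalues_le_l2_opNorm (i : n) : |hM.eigenvalues i| ≤ ‖M‖ := by
  calc |hM.eigenvalues i| = ‖(RCLike.ofReal ∘ hM.eigenvalues : n → ℂ) i‖ := by simp
    _ ≤ ‖(RCLike.ofReal ∘ hM.eigenvalues : n → ℂ)‖ := norm_le_pi_norm _ i
    _ = ‖M‖ := by
      conv_rhs => rw [hM.spectral_theorem]
      simp [CStarRing.norm_coe_unitary_mul_star]

end IsHermitian

end Matrix

lemma truncation_eq {d : ℕ} (M : Matrix (Fin d) (Fin d) ℂ) (hM : M.IsHermitian) (ε : ℝ) :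
    truncation M hM ε = (hM.eigenvectorUnitary : Matrix (Fin d) (Fin d) ℂ) *
      diagonal (RCLike.ofReal ∘ hardThreshold (ε / 2) ∘ hM.eigenvalues) *
      (hM.eigenvectorUnitary : Matrix (Fin d) (Fin d) ℂ)ᴴ := by
  rw [truncation, specProj]
  set U := (hM.eigenvectorUnitary : Matrix (Fin d) (Fin d) ℂ)
  set χ : Fin d → ℂ := fun i => if ε / 2 ≤ |hM.eigenvalues i| then 1 else 0
  have hD : Uᴴ * M * U = diagonal (RCLike.ofReal ∘ hM.eigenvalues) := by
    simpa [star_eq_conjTranspose] using hM.conjStarAlgAut_star_eigenvectorUnitary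
  have hcut : diagonal (RCLike.ofReal ∘ hardThreshold (ε / 2) ∘ hM.eigenvalues) =
      diagonal χ * (Uᴴ * M * U) * diagonal χ := by
    rw [hD, diagonal_mul_diagonal, diagonal_mul_diagonal]
    congr 1 with i
    by_cases h : ε / 2 ≤ |hM.eigenvalues i| <;> simp [χ, hardThreshold, h]
  rw [hcut]
  simp only [mul_assoc]

theorem kronecker_truncation_opNorm_le_general {d : ℕ} (ε : ℝ) (hε0 : 0 < ε)
    (M : Matrix (Fin d) (Fin d) ℂ) (hM : M.IsHermitian) (hMnorm : ‖M‖ ≤ 1) :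
    ‖M ⊗ₖ Mᵀ - truncation M hM ε ⊗ₖ (truncation M hM ε)ᵀ‖ ≤ ε / 2 := by
  set U := (hM.eigenvectorUnitary : Matrix (Fin d) (Fin d) ℂ)
  set e := hM.eigenvalues
  have hdiff := conj_diagonal_kronecker_transpose_sub U (RCLike.ofReal ∘ e)
    (RCLike.ofReal ∘ hardThreshold (ε / 2) ∘ e)
  have hMU : U * diagonal (RCLike.ofReal ∘ e) * Uᴴ = M := by
    simpa [star_eq_conjTranspose] using hM.spectral_theorem.symm
  rw [hMU, ← truncation_eq] at hdiff
  have hW : U ⊗ₖ U.map star ∈ unitary _ :=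
    kronecker_map_star_mem_unitary hM.eigenvectorUnitary.prop
  rw [hdiff, ← star_eq_conjTranspose, CStarRing.norm_coe_unitary_mul_star ⟨_, hW⟩,
    l2_opNorm_diagonal]
  refine (pi_norm_le_iff_of_nonneg (by positivity)).mpr fun p => ?_
  have he : ∀ i, |e i| ≤ 1 := fun i => (hM.abs_eigenvalues_le_l2_opNorm i).trans hMnorm
  have hentry := abs_mul_sub_hardThreshold_mul_le (by positivity : 0 ≤ ε / 2) (he p.1) (he p.2)
  simp only [Function.comp_apply]
  exact_mod_cast hentry

/-- For `ε ∈ (0,1]` and a Hermitian `M` with operator norm `‖M‖ ≤ 1`,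
the L2 operator norm of the Kronecker-product difference satisfies
`‖M ⊗ Mᵀ − M_ε ⊗ M_εᵀ‖ ≤ ε/2`. (Norms here are L2 operator norms.) -/
theorem kronecker_truncation_opNorm_le {d : ℕ} (ε : ℝ) (hε0 : 0 < ε) (hε1 : ε ≤ 1)
    (M : Matrix (Fin d) (Fin d) ℂ) (hM : M.IsHermitian) (hMnorm : ‖M‖ ≤ 1) :
    ‖M ⊗ₖ Mᵀ - truncation M hM ε ⊗ₖ (truncation M hM ε)ᵀ‖ ≤ ε / 2 :=
  kronecker_truncation_opNorm_le_general ε hε0 M hM hMnorm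
end
end

section
/- Let a₁, a₂, b₁, b₂ be positive integers. Let M be an operator on ℂ^{a₁} ⊗ ℂ^{a₂} ⊗ ℂ^{b₁} ⊗ ℂ^{b₂} with 0 ≤ M ≤ I which is separable across the (first two factors)|(last two factors) cut, i.e. M = Σ_t A_t ⊗ B_t with each A_t a positive semidefinite operator on ℂ^{a₁} ⊗ ℂ^{a₂} and each B_t a positive semidefinite operator on ℂ^{b₁} ⊗ ℂ^{b₂}. Let σ = Σ_i p_i ρ_i ⊗ τ_i be a separable state, where p_i ≥ 0 with Σ_i p_i = 1, each ρ_i is a density matrix on ℂ^{a₂}, and each τ_i is a density matrix on ℂ^{b₂}. Then there exists an operator M' on ℂ^{a₁} ⊗ ℂ^{b₁} with 0 ≤ M' ≤ I, of the separable form M' = Σ_s A'_s ⊗ B'_s with A'_s positive semidefinite on ℂ^{a₁} and B'_s positive semidefinite on ℂ^{b₁}, such that for every operator X on ℂ^{a₁} ⊗ ℂ^{b₁}: Tr[M · Θ(X ⊗ σ)] = Tr[M' X], where Θ is the canonical unitary reordering of tensor factors from (ℂ^{a₁} ⊗ ℂ^{b₁}) ⊗ (ℂ^{a₂} ⊗ ℂ^{b₂})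 to ℂ^{a₁} ⊗ ℂ^{a₂} ⊗ ℂ^{b₁} ⊗ ℂ^{b₂} (conjugating the operator X ⊗ σ accordingly). -/
open Matrix
open scoped Kronecker ComplexOrder

noncomputable section

/-- An operator on a bipartite space is separable (across the `α|β` cut) if it is a
finite sum `Σ_t A_t ⊗ B_t` of Kronecker products of positive semidefinite operators. -/
def IsSeparableOp {α β : Type*} [Fintype α] [Fintype β] [DecidableEq α] [DecidableEq β]
    (M : Matrix (α × β) (α × β) ℂ) : Prop :=
  ∃ (n : ℕ) (A : Fin n → Matrix α α ℂ) (B : Fin n → Matrix β β ℂ),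
    (∀ t, (A t).PosSemidef) ∧ (∀ t, (B t).PosSemidef) ∧ M = ∑ t, A t ⊗ₖ B t

/-- A separable state: a convex combination `Σ_i p_i ρ_i ⊗ τ_i` of Kronecker products of
density matrices. -/
def IsSeparableState {α β : Type*} [Fintype α] [Fintype β] [DecidableEq α] [DecidableEq β]
    (σ : Matrix (α × β) (α × β) ℂ) : Prop :=
  ∃ (n : ℕ) (p : Fin n → ℝ) (ρ : Fin n → Matrix α α ℂ) (τ : Fin n → Matrix β β ℂ),
    (∀ i, 0 ≤ p i) ∧ (∑ i, p i = 1) ∧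
    (∀ i, (ρ i).PosSemidef ∧ (ρ i).trace = 1) ∧
    (∀ i, (τ i).PosSemidef ∧ (τ i).trace = 1) ∧
    σ = ∑ i, (p i : ℂ) • (ρ i ⊗ₖ τ i)

/-- `Θ(X ⊗ σ)`: the operator `X ⊗ σ` on `(ℂ^{a₁} ⊗ ℂ^{b₁}) ⊗ (ℂ^{a₂} ⊗ ℂ^{b₂})`,
conjugated by the canonical unitary reordering of tensor factors into
`ℂ^{a₁} ⊗ ℂ^{a₂} ⊗ ℂ^{b₁} ⊗ ℂ^{b₂}`. -/
def reorderTensor {α₁ β₁ α₂ β₂ : Type*}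
    (X : Matrix (α₁ × β₁) (α₁ × β₁) ℂ) (σ : Matrix (α₂ × β₂) (α₂ × β₂) ℂ) :
    Matrix ((α₁ × α₂) × (β₁ × β₂)) ((α₁ × α₂) × (β₁ × β₂)) ℂ :=
  Matrix.of fun p q =>
    X (p.1.1, p.2.1) (q.1.1, q.2.1) * σ (p.1.2, p.2.2) (q.1.2, q.2.2)

/-! The operator `M'` is the partial trace `Tr_{a₂ b₂}[M (1 ⊗ σ)]`, with the tensor factors of `M`
regrouped as `(a₁ b₁)(a₂ b₂)`. The trace identity is then the defining property of the partial
trace. Positivity of `M'` and of `1 - M' = Tr_{a₂ b₂}[(1 - M)(1 ⊗ σ)]` (using `Tr σ = 1`) follows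
because `Tr_γ[N (1 ⊗ C⋆C)] = Tr_γ[(1 ⊗ C) N (1 ⊗ C⋆)]` is a partial trace of a congruence of `N`.
Separability: for `M = Σ_t A_t ⊗ B_t` and `σ = Σ_i p_i ρ_i ⊗ τ_i`, the construction factors as
`M' = Σ_{t,i} p_i Tr_{a₂}[A_t (1 ⊗ ρ_i)] ⊗ Tr_{b₂}[B_t (1 ⊗ τ_i)]`, a sum of products of positive
operators. -/

namespace Matrix

variable {R α β γ δ : Type*}

section traceRight

variable [CommSemiring R] [Fintype γ]

def traceRight : Matrix (α × γ) (α × γ) R →ₗ[R] Matrix α α R where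
  toFun N := of fun i j => ∑ k, N (i, k) (j, k)
  map_add' _ _ := by ext; simp [Finset.sum_add_distrib]
  map_smul' _ _ := by ext; simp [Finset.mul_sum]

@[simp]
lemma traceRight_apply (N : Matrix (α × γ) (α × γ) R) (i j : α) :
    traceRight N i j = ∑ k, N (i, k) (j, k) := rfl

lemma traceRight_kronecker (A : Matrix α α R) (B : Matrix γ γ R) :
    traceRight (A ⊗ₖ B) = B.trace • A := by
  ext i j
  simp [trace, Finset.mul_sum, mul_comm]

lemma trace_traceRight_mul [Fintype α] [DecidableEq γ] (N : Matrix (α × γ) (α × γ) R)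
    (X : Matrix α α R) : (traceRight N * X).trace = (N * (X ⊗ₖ 1)).trace := by
  simp only [trace, diag_apply, mul_apply, traceRight_apply, Finset.sum_mul, kroneckerMap_apply,
    one_apply, mul_ite, mul_one, mul_zero, Fintype.sum_prod_type, Finset.sum_ite_eq',
    Finset.mem_univ, if_true]
  exact Finset.sum_congr rfl fun _ _ => Finset.sum_comm

lemma traceRight_mul_one_kronecker_comm [Fintype α] [DecidableEq α]
    (N : Matrix (α × γ) (α × γ) R) (P : Matrix γ γ R) :
    traceRight (N * (1 ⊗ₖ P)) = traceRight ((1 ⊗ₖ P) * N) := by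
  ext i j
  simp only [traceRight_apply, mul_apply, kroneckerMap_apply, one_apply, ite_mul, one_mul,
    zero_mul, mul_ite, mul_zero, Fintype.sum_prod_type, Finset.sum_ite_irrel,
    Finset.sum_const_zero, Finset.sum_ite_eq', Finset.mem_univ, if_true, Finset.sum_ite_eq]
  rw [Finset.sum_comm]
  exact Finset.sum_congr rfl fun _ _ => Finset.sum_congr rfl fun _ _ => mul_comm _ _

lemma traceRight_submatrix_prodProdProdComm [Fintype δ] (P : Matrix (α × γ) (α × γ) R)
    (Q : Matrix (β × δ) (β × δ) R) :
    traceRight ((P ⊗ₖ Q).submatrix (Equiv.prodProdProdComm α β γ δ)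
      (Equiv.prodProdProdComm α β γ δ)) = traceRight P ⊗ₖ traceRight Q := by
  ext ⟨i, i'⟩ ⟨j, j'⟩
  simp [Fintype.sum_prod_type, Finset.sum_mul_sum]

end traceRight

lemma trace_submatrix_equiv [AddCommMonoid R] [Fintype α] [Fintype β] (A : Matrix β β R)
    (e : α ≃ β) : (A.submatrix e e).trace = A.trace :=
  e.sum_comp fun i => A i i

section PosSemidef

variable {𝕜 : Type*} [RCLike 𝕜] [Fintype γ]

lemma PosSemidef.traceRight {N : Matrix (α × γ) (α × γ) 𝕜} (hN : N.PosSemidef) :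
    (traceRight N).PosSemidef := by
  have hblocks : Matrix.traceRight N = ∑ k, N.submatrix (·, k) (·, k) := by
    ext; simp [Matrix.sum_apply]
  rw [hblocks]
  exact posSemidef_sum _ fun k _ => hN.submatrix _

open scoped MatrixOrder in
lemma PosSemidef.traceRight_mul_one_kronecker [Fintype α] [DecidableEq α] [DecidableEq γ]
    {N : Matrix (α × γ) (α × γ) 𝕜} {P : Matrix γ γ 𝕜} (hN : N.PosSemidef) (hP : P.PosSemidef) :
    (Matrix.traceRight (N * (1 ⊗ₖ P))).PosSemidef := by
  obtain ⟨C, rfl⟩ := CStarAlgebra.nonneg_iff_eq_star_mul_self.mp hP.nonneg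
  have hC : (1 : Matrix α α 𝕜) ⊗ₖ C = (1 ⊗ₖ Cᴴ)ᴴ := by
    rw [conjTranspose_kronecker, conjTranspose_one, conjTranspose_conjTranspose]
  rw [star_eq_conjTranspose, ← one_mul (1 : Matrix α α 𝕜), mul_kronecker_mul, ← mul_assoc,
    traceRight_mul_one_kronecker_comm, hC, ← mul_assoc]
  exact (hN.conjTranspose_mul_mul_same _).traceRight

end PosSemidef

end Matrix

section Separable

variable {α β : Type*} [Fintype α] [Fintype β] [DecidableEq α] [DecidableEq β]

lemma IsSeparableOp.zero : IsSeparableOp (0 : Matrix (α × β) (α × β) ℂ) :=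
  ⟨0, Fin.elim0, Fin.elim0, nofun, nofun, by simp⟩

lemma IsSeparableOp.add {M N : Matrix (α × β) (α × β) ℂ} (hM : IsSeparableOp M)
    (hN : IsSeparableOp N) : IsSeparableOp (M + N) := by
  obtain ⟨m, A, B, hA, hB, rfl⟩ := hM
  obtain ⟨n, C, D, hC, hD, rfl⟩ := hN
  refine ⟨m + n, Fin.append A C, Fin.append B D, Fin.addCases (by simpa) (by simpa),
    Fin.addCases (by simpa) (by simpa), ?_⟩
  simp [Fin.sum_univ_add]

lemma IsSeparableOp.sum {ι : Type*} {M : ι → Matrix (α × β) (α × β) ℂ} (s : Finset ι)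
    (hM : ∀ i ∈ s, IsSeparableOp (M i)) : IsSeparableOp (∑ i ∈ s, M i) := by
  classical
  induction s using Finset.induction_on with
  | empty => simpa using IsSeparableOp.zero
  | insert i s hi ih =>
    rw [Finset.sum_insert hi]
    exact (hM i (s.mem_insert_self i)).add (ih fun j hj => hM j (Finset.mem_insert_of_mem hj))

lemma IsSeparableOp.kronecker {A : Matrix α α ℂ} {B : Matrix β β ℂ} (hA : A.PosSemidef)
    (hB : B.PosSemidef) : IsSeparableOp (A ⊗ₖ B) :=
  ⟨1, fun _ => A, fun _ => B, fun _ => hA, fun _ => hB, by simp⟩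

lemma IsSeparableState.posSemidef {σ : Matrix (α × β) (α × β) ℂ} (hσ : IsSeparableState σ) :
    σ.PosSemidef := by
  obtain ⟨n, p, ρ, τ, hp, -, hρ, hτ, rfl⟩ := hσ
  exact posSemidef_sum _ fun i _ =>
    ((hρ i).1.kronecker (hτ i).1).smul (Complex.zero_le_real.mpr (hp i))

lemma IsSeparableState.trace_eq_one {σ : Matrix (α × β) (α × β) ℂ} (hσ : IsSeparableState σ) :
    σ.trace = 1 := by
  obtain ⟨n, p, ρ, τ, -, hp, hρ, hτ, rfl⟩ := hσ
  simp [trace_sum, trace_kronecker, (hρ _).2, (hτ _).2, ← Complex.ofReal_sum, hp]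

end Separable

section absorbState

variable {α β γ δ : Type*} [Fintype α] [Fintype β] [Fintype γ] [Fintype δ]
  [DecidableEq α] [DecidableEq β]

section CommSemiring

variable {R : Type*} [CommSemiring R]

def absorbState (M : Matrix ((α × γ) × (β × δ)) ((α × γ) × (β × δ)) R)
    (σ : Matrix (γ × δ) (γ × δ) R) : Matrix (α × β) (α × β) R :=
  traceRight (M.submatrix (Equiv.prodProdProdComm α β γ δ) (Equiv.prodProdProdComm α β γ δ) *
    (1 ⊗ₖ σ))

lemma absorbState_sum_left {ι : Type*} (s : Finset ι)
    (M : ι → Matrix ((α × γ) × (β × δ)) ((α × γ) × (β × δ)) R) (σ : Matrix (γ × δ) (γ × δ) R) :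
    absorbState (∑ i ∈ s, M i) σ = ∑ i ∈ s, absorbState (M i) σ := by
  have hsub : ∀ e : (α × β) × γ × δ ≃ (α × γ) × β × δ,
      (∑ i ∈ s, M i).submatrix e e = ∑ i ∈ s, (M i).submatrix e e := fun e => by
    ext; simp [Matrix.sum_apply]
  simp only [absorbState, hsub, Finset.sum_mul, map_sum]

lemma absorbState_sum_smul_right {ι : Type*} (s : Finset ι)
    (M : Matrix ((α × γ) × (β × δ)) ((α × γ) × (β × δ)) R) (c : ι → R)
    (σ : ι → Matrix (γ × δ) (γ × δ) R) :
    absorbState M (∑ i ∈ s, c i • σ i) = ∑ i ∈ s, c i • absorbState M (σ i) := by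
  have hkron : (1 : Matrix (α × β) (α × β) R) ⊗ₖ (∑ i ∈ s, c i • σ i) =
      ∑ i ∈ s, c i • ((1 : Matrix (α × β) (α × β) R) ⊗ₖ σ i) := by
    ext; simp [Matrix.sum_apply, Finset.mul_sum, mul_left_comm]
  simp only [absorbState, hkron, Finset.mul_sum, mul_smul_comm, map_sum, map_smul]

lemma absorbState_kronecker_kronecker (A : Matrix (α × γ) (α × γ) R)
    (B : Matrix (β × δ) (β × δ) R) (ρ : Matrix γ γ R) (τ : Matrix δ δ R) :
    absorbState (A ⊗ₖ B) (ρ ⊗ₖ τ) = traceRight (A * (1 ⊗ₖ ρ)) ⊗ₖ traceRight (B * (1 ⊗ₖ τ)) := by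
  have hregroup : (1 : Matrix (α × β) (α × β) R) ⊗ₖ (ρ ⊗ₖ τ) =
      (((1 : Matrix α α R) ⊗ₖ ρ) ⊗ₖ ((1 : Matrix β β R) ⊗ₖ τ)).submatrix
        (Equiv.prodProdProdComm α β γ δ) (Equiv.prodProdProdComm α β γ δ) := by
    ext; simp [one_apply, Prod.ext_iff, ← ite_and, and_comm]
  rw [absorbState, hregroup, submatrix_mul_equiv, ← mul_kronecker_mul,
    traceRight_submatrix_prodProdProdComm]

end CommSemiring

lemma one_sub_absorbState {R : Type*} [CommRing R] [DecidableEq γ] [DecidableEq δ]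
    (M : Matrix ((α × γ) × (β × δ)) ((α × γ) × (β × δ)) R) {σ : Matrix (γ × δ) (γ × δ) R}
    (hσ : σ.trace = 1) : 1 - absorbState M σ = absorbState (1 - M) σ := by
  have hsub : ∀ e : (α × β) × γ × δ ≃ (α × γ) × β × δ,
      (1 - M).submatrix e e = 1 - M.submatrix e e := fun e => by
    ext; simp [one_apply]
  rw [absorbState, absorbState, hsub, sub_mul, one_mul, map_sub, traceRight_kronecker, hσ,
    one_smul]

variable [DecidableEq γ] [DecidableEq δ]

lemma Matrix.PosSemidef.absorbState {𝕜 : Type*} [RCLike 𝕜]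
    {M : Matrix ((α × γ) × (β × δ)) ((α × γ) × (β × δ)) 𝕜} {σ : Matrix (γ × δ) (γ × δ) 𝕜}
    (hM : M.PosSemidef) (hσ : σ.PosSemidef) : (absorbState M σ).PosSemidef :=
  (hM.submatrix _).traceRight_mul_one_kronecker hσ

lemma IsSeparableOp.absorbState {M : Matrix ((α × γ) × (β × δ)) ((α × γ) × (β × δ)) ℂ}
    {σ : Matrix (γ × δ) (γ × δ) ℂ} (hM : IsSeparableOp M) (hσ : IsSeparableState σ) :
    IsSeparableOp (absorbState M σ) := by
  obtain ⟨n, A, B, hA, hB, rfl⟩ := hM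
  obtain ⟨m, p, ρ, τ, hp, -, hρ, hτ, rfl⟩ := hσ
  rw [absorbState_sum_left]
  refine IsSeparableOp.sum _ fun t _ => ?_
  rw [absorbState_sum_smul_right]
  refine IsSeparableOp.sum _ fun i _ => ?_
  rw [absorbState_kronecker_kronecker, ← smul_kronecker]
  exact IsSeparableOp.kronecker
    (((hA t).traceRight_mul_one_kronecker (hρ i).1).smul (Complex.zero_le_real.mpr (hp i)))
    ((hB t).traceRight_mul_one_kronecker (hτ i).1)

lemma trace_mul_reorderTensor (M : Matrix ((α × γ) × (β × δ)) ((α × γ) × (β × δ)) ℂ)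
    (σ : Matrix (γ × δ) (γ × δ) ℂ) (X : Matrix (α × β) (α × β) ℂ) :
    (M * reorderTensor X σ).trace = (absorbState M σ * X).trace := by
  have hreorder : reorderTensor X σ = (X ⊗ₖ σ).submatrix (Equiv.prodProdProdComm α β γ δ).symm
      (Equiv.prodProdProdComm α β γ δ).symm := rfl
  have hsplit : X ⊗ₖ σ = (1 ⊗ₖ σ) * (X ⊗ₖ 1) := by
    rw [← mul_kronecker_mul, one_mul, mul_one]
  rw [absorbState, trace_traceRight_mul, hreorder,
    ← trace_submatrix_equiv _ (Equiv.prodProdProdComm α β γ δ), ← submatrix_mul_equiv _ _ _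
      (Equiv.prodProdProdComm α β γ δ), submatrix_submatrix, Equiv.symm_comp_self, submatrix_id_id,
    hsplit, mul_assoc]

end absorbState

theorem separable_absorb_resource_state_general (a₁ a₂ b₁ b₂ : ℕ)
    (M : Matrix ((Fin a₁ × Fin a₂) × (Fin b₁ × Fin b₂))
      ((Fin a₁ × Fin a₂) × (Fin b₁ × Fin b₂)) ℂ)
    (hM0 : M.PosSemidef) (hM1 : (1 - M).PosSemidef) (hMsep : IsSeparableOp M)
    (σ : Matrix (Fin a₂ × Fin b₂) (Fin a₂ × Fin b₂) ℂ) (hσ : IsSeparableState σ) :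
    ∃ M' : Matrix (Fin a₁ × Fin b₁) (Fin a₁ × Fin b₁) ℂ,
      M'.PosSemidef ∧ (1 - M').PosSemidef ∧ IsSeparableOp M' ∧
      ∀ X : Matrix (Fin a₁ × Fin b₁) (Fin a₁ × Fin b₁) ℂ,
        Matrix.trace (M * reorderTensor X σ) = Matrix.trace (M' * X) := by
  refine ⟨absorbState M σ, hM0.absorbState hσ.posSemidef, ?_, hMsep.absorbState hσ,
    trace_mul_reorderTensor M σ⟩
  rw [one_sub_absorbState M hσ.trace_eq_one]
  exact hM1.absorbState hσ.posSemidef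

/-- Let `M` be a separable operator with `0 ≤ M ≤ I` on
`ℂ^{a₁} ⊗ ℂ^{a₂} ⊗ ℂ^{b₁} ⊗ ℂ^{b₂}` across the `(a₁,a₂)|(b₁,b₂)` cut, and let `σ` be a
separable state on `ℂ^{a₂} ⊗ ℂ^{b₂}`. Then there exists a separable operator `M'` with
`0 ≤ M' ≤ I` on `ℂ^{a₁} ⊗ ℂ^{b₁}` such that `Tr[M·Θ(X ⊗ σ)] = Tr[M'·X]` for every
operator `X` on `ℂ^{a₁} ⊗ ℂ^{b₁}`. -/
theorem separable_absorb_resource_state (a₁ a₂ b₁ b₂ : ℕ)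
    (ha₁ : 0 < a₁) (ha₂ : 0 < a₂) (hb₁ : 0 < b₁) (hb₂ : 0 < b₂)
    (M : Matrix ((Fin a₁ × Fin a₂) × (Fin b₁ × Fin b₂))
      ((Fin a₁ × Fin a₂) × (Fin b₁ × Fin b₂)) ℂ)
    (hM0 : M.PosSemidef) (hM1 : (1 - M).PosSemidef) (hMsep : IsSeparableOp M)
    (σ : Matrix (Fin a₂ × Fin b₂) (Fin a₂ × Fin b₂) ℂ) (hσ : IsSeparableState σ) :
    ∃ M' : Matrix (Fin a₁ × Fin b₁) (Fin a₁ × Fin b₁) ℂ,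
      M'.PosSemidef ∧ (1 - M').PosSemidef ∧ IsSeparableOp M' ∧
      ∀ X : Matrix (Fin a₁ × Fin b₁) (Fin a₁ × Fin b₁) ℂ,
        Matrix.trace (M * reorderTensor X σ) = Matrix.trace (M' * X) :=
  separable_absorb_resource_state_general a₁ a₂ b₁ b₂ M hM0 hM1 hMsep σ hσ
end
end

section
/- For every d×d Hermitian matrix M and all unit vectors ψ, φ ∈ ℂ^d: Tr[(I ⊗ |ψ⟩⟨ψ|) · M^{⊗2} · SWAP_{φ'} · M^{⊗2}] = ⟨ψ|M⁴|ψ⟩ + ⟨φ|M²|φ⟩·f − 2·Re(⟨φ|M³|ψ⟩·⟨ψ|M|φ⟩), where f := |⟨φ|M|ψ⟩|². -/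
open Matrix
open scoped Kronecker

noncomputable section

/-- The SWAP operator on `ℂ^d ⊗ ℂ^d`, determined by `SWAP (u ⊗ v) = v ⊗ u`. -/
def swapOp (d : ℕ) : Matrix (Fin d × Fin d) (Fin d × Fin d) ℂ :=
  Matrix.of fun i j => if i.1 = j.2 ∧ i.2 = j.1 then (1 : ℂ) else 0

/-- `P_{ψ'} := I − |ψ⟩⟨ψ|`. -/
def Pperp {d : ℕ} (ψ : EuclideanSpace ℂ (Fin d)) : Matrix (Fin d) (Fin d) ℂ :=
  1 - ketbra ψ

/-- `SWAP_{ψ'} := P_{ψ'}^{⊗2} · SWAP · P_{ψ'}^{⊗2}`. -/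
def swapPerp {d : ℕ} (ψ : EuclideanSpace ℂ (Fin d)) :
    Matrix (Fin d × Fin d) (Fin d × Fin d) ℂ :=
  (Pperp ψ ⊗ₖ Pperp ψ) * swapOp d * (Pperp ψ ⊗ₖ Pperp ψ)

/-!
Cyclicity of the trace and `Tr[(A ⊗ B) · SWAP] = Tr[A B]` collapse the left-hand side to
`⟨ψ|N²|ψ⟩` with `N = M P_{φ'} M`, where the two projections meeting in the middle merge since
`P_{φ'}² = P_{φ'}`. Expanding `P_{φ'} = I − |φ⟩⟨φ|` gives four terms, each factoring through
`|φ⟩⟨φ|` into products of matrix elements; hermiticity of `M` turns `⟨ψ|M|φ⟩⟨φ|M|ψ⟩` into `f` and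
pairs the two cross terms into twice a real part.
-/

theorem dotProduct_star_self_of_norm_eq_one {d : ℕ} {φ : EuclideanSpace ℂ (Fin d)} (hφ : ‖φ‖ = 1) :
    star (φ : Fin d → ℂ) ⬝ᵥ (φ : Fin d → ℂ) = 1 := by
  rw [dotProduct_comm, ← EuclideanSpace.inner_eq_star_dotProduct, inner_self_eq_norm_sq_to_K, hφ]
  simp

theorem ketbra_mul_self {d : ℕ} {φ : EuclideanSpace ℂ (Fin d)} (hφ : ‖φ‖ = 1) :
    ketbra φ * ketbra φ = ketbra φ := by
  rw [ketbra, vecMulVec_mul_vecMulVec, dotProduct_star_self_of_norm_eq_one hφ, one_smul]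

theorem Pperp_mul_self {d : ℕ} {φ : EuclideanSpace ℂ (Fin d)} (hφ : ‖φ‖ = 1) :
    Pperp φ * Pperp φ = Pperp φ := by
  rw [Pperp, sub_mul, mul_sub, mul_sub, ketbra_mul_self hφ]
  simp

theorem trace_ketbra_mul {d : ℕ} (ψ : EuclideanSpace ℂ (Fin d)) (X : Matrix (Fin d) (Fin d) ℂ) :
    trace (ketbra ψ * X) = braM ψ X ψ := by
  rw [ketbra, vecMulVec_mul, trace_vecMulVec, braM, dotProduct_mulVec, dotProduct_comm]

theorem braM_vecMulVec {d : ℕ} (χ ψ : EuclideanSpace ℂ (Fin d)) (u v : Fin d → ℂ) :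
    braM χ (vecMulVec u v) ψ = (star (χ : Fin d → ℂ) ⬝ᵥ u) * (v ⬝ᵥ ψ) := by
  rw [braM, vecMulVec_mulVec]
  simp [dotProduct_smul, mul_comm]

theorem braM_mul_ketbra_mul {d : ℕ} (χ φ ψ : EuclideanSpace ℂ (Fin d))
    (A B : Matrix (Fin d) (Fin d) ℂ) :
    braM χ (A * ketbra φ * B) ψ = braM χ A φ * braM φ B ψ := by
  rw [ketbra, mul_vecMulVec, vecMulVec_mul, braM_vecMulVec, braM, braM, ← dotProduct_mulVec]

theorem star_braM {d : ℕ} (φ ψ : EuclideanSpace ℂ (Fin d)) (X : Matrix (Fin d) (Fin d) ℂ) :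
    star (braM φ X ψ) = braM ψ Xᴴ φ := by
  rw [braM, braM]
  conv_rhs => rw [dotProduct_mulVec, ← star_mulVec, star_dotProduct]

theorem braM_add {d : ℕ} (φ ψ : EuclideanSpace ℂ (Fin d)) (X Y : Matrix (Fin d) (Fin d) ℂ) :
    braM φ (X + Y) ψ = braM φ X ψ + braM φ Y ψ := by
  rw [braM, add_mulVec, dotProduct_add, braM, braM]

theorem braM_sub {d : ℕ} (φ ψ : EuclideanSpace ℂ (Fin d)) (X Y : Matrix (Fin d) (Fin d) ℂ) :
    braM φ (X - Y) ψ = braM φ X ψ - braM φ Y ψ := by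
  rw [braM, sub_mulVec, dotProduct_sub, braM, braM]

theorem trace_kronecker_mul_swapOp {d : ℕ} (A B : Matrix (Fin d) (Fin d) ℂ) :
    trace ((A ⊗ₖ B) * swapOp d) = trace (A * B) := by
  simp [trace, mul_apply, swapOp, Fintype.sum_prod_type, ite_and]

theorem trace_kronecker_mul_swapOp_mul_kronecker {d : ℕ} (A B C D : Matrix (Fin d) (Fin d) ℂ) :
    trace ((A ⊗ₖ B) * swapOp d * (C ⊗ₖ D)) = trace (C * A * (D * B)) := by
  rw [trace_mul_comm, ← Matrix.mul_assoc, ← mul_kronecker_mul, trace_kronecker_mul_swapOp]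

theorem trace_one_kronecker_mul_sandwich_swapOp {d : ℕ} (K M P : Matrix (Fin d) (Fin d) ℂ) :
    trace ((1 ⊗ₖ K) * (M ⊗ₖ M) * ((P ⊗ₖ P) * swapOp d * (P ⊗ₖ P)) * (M ⊗ₖ M)) =
      trace (K * (M * P * P * M) ^ 2) := by
  have hsplit : (1 ⊗ₖ K) * (M ⊗ₖ M) * ((P ⊗ₖ P) * swapOp d * (P ⊗ₖ P)) * (M ⊗ₖ M) =
      ((1 * M * P) ⊗ₖ (K * M * P)) * swapOp d * ((P * M) ⊗ₖ (P * M)) := by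
    simp only [mul_kronecker_mul, Matrix.mul_assoc]
  have hcycle : P * M * (1 * M * P) * (P * M * (K * M * P)) =
      (P * M * M * P * P * M) * (K * (M * P)) := by
    simp only [Matrix.mul_assoc, Matrix.one_mul]
  rw [hsplit, trace_kronecker_mul_swapOp_mul_kronecker, hcycle, trace_mul_comm, sq]
  simp only [Matrix.mul_assoc]

theorem trace_one_kronecker_ketbra_mul_swapPerp {d : ℕ} (M : Matrix (Fin d) (Fin d) ℂ)
    (ψ : EuclideanSpace ℂ (Fin d)) {φ : EuclideanSpace ℂ (Fin d)} (hφ : ‖φ‖ = 1) :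
    trace ((1 ⊗ₖ ketbra ψ) * (M ⊗ₖ M) * swapPerp φ * (M ⊗ₖ M)) =
      braM ψ ((M * Pperp φ * M) ^ 2) ψ := by
  rw [swapPerp, trace_one_kronecker_mul_sandwich_swapOp, trace_ketbra_mul, Matrix.mul_assoc M,
    Pperp_mul_self hφ]

theorem braM_sq_mul_Pperp_mul {d : ℕ} (M : Matrix (Fin d) (Fin d) ℂ)
    (ψ φ : EuclideanSpace ℂ (Fin d)) :
    braM ψ ((M * Pperp φ * M) ^ 2) ψ =
      braM ψ (M ^ 4) ψ - braM ψ M φ * braM φ (M ^ 3) ψ - braM ψ (M ^ 3) φ * braM φ M ψ +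
        braM ψ M φ * (braM φ (M ^ 2) φ * braM φ M ψ) := by
  have hexpand : (M * Pperp φ * M) ^ 2 = M ^ 4 - M * ketbra φ * M ^ 3 - M ^ 3 * ketbra φ * M
      + M * ketbra φ * (M ^ 2 * ketbra φ * M) := by
    simp only [Pperp, pow_succ]
    noncomm_ring
  rw [hexpand, braM_add, braM_sub, braM_sub, braM_mul_ketbra_mul, braM_mul_ketbra_mul,
    braM_mul_ketbra_mul, braM_mul_ketbra_mul]

theorem trace_id_ketbra_swapPerp_general {d : ℕ}
    (M : Matrix (Fin d) (Fin d) ℂ) (hM : M.IsHermitian)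
    (ψ φ : EuclideanSpace ℂ (Fin d)) (hφ : ‖φ‖ = 1) :
    Matrix.trace (((1 : Matrix (Fin d) (Fin d) ℂ) ⊗ₖ ketbra ψ) * (M ⊗ₖ M) *
        swapPerp φ * (M ⊗ₖ M)) =
      braM ψ (M ^ 4) ψ + braM φ (M ^ 2) φ * (‖braM φ M ψ‖ ^ 2 : ℝ) -
        2 * ((braM φ (M ^ 3) ψ * braM ψ M φ).re : ℝ) := by
  have hM1 : braM ψ M φ = star (braM φ M ψ) := by rw [star_braM, hM.eq]
  have hM3 : braM ψ (M ^ 3) φ = star (braM φ (M ^ 3) ψ) := by rw [star_braM, (hM.pow 3).eq]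
  rw [trace_one_kronecker_ketbra_mul_swapPerp M ψ hφ, braM_sq_mul_Pperp_mul, hM1, hM3]
  set a := braM φ M ψ
  set b := braM φ (M ^ 3) ψ
  have hnorm : star a * a = ((‖a‖ ^ 2 : ℝ) : ℂ) := by
    rw [Complex.ofReal_pow]; exact Complex.conj_mul' a
  have hre : star a * b + star b * a = 2 * ((b * star a).re : ℂ) := by
    have h := Complex.add_conj (b * star a)
    push_cast at h
    rw [← h]
    simp [mul_comm]
  linear_combination braM φ (M ^ 2) φ * hnorm - hre

/-- For Hermitian `M` and unit vectors `ψ, φ`, with `f := |⟨φ|M|ψ⟩|²`: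
`Tr[(I ⊗ |ψ⟩⟨ψ|) M^{⊗2} SWAP_{φ'} M^{⊗2}]
  = ⟨ψ|M⁴|ψ⟩ + ⟨φ|M²|φ⟩·f − 2·Re(⟨φ|M³|ψ⟩·⟨ψ|M|φ⟩)`. -/
theorem trace_id_ketbra_swapPerp {d : ℕ}
    (M : Matrix (Fin d) (Fin d) ℂ) (hM : M.IsHermitian)
    (ψ φ : EuclideanSpace ℂ (Fin d)) (hψ : ‖ψ‖ = 1) (hφ : ‖φ‖ = 1) :
    Matrix.trace (((1 : Matrix (Fin d) (Fin d) ℂ) ⊗ₖ ketbra ψ) * (M ⊗ₖ M) *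
        swapPerp φ * (M ⊗ₖ M)) =
      braM ψ (M ^ 4) ψ + braM φ (M ^ 2) φ * (‖braM φ M ψ‖ ^ 2 : ℝ) -
        2 * ((braM φ (M ^ 3) ψ * braM ψ M φ).re : ℝ) :=
  trace_id_ketbra_swapPerp_general M hM ψ φ hφ
end
end

section
/- For every d×d Hermitian matrix M and all unit vectors ψ, φ ∈ ℂ^d: Tr[SWAP_{ψ'} · M^{⊗2} · SWAP_{φ'} · M^{⊗2}] = Tr[P_{ψ'}^{⊗2} · M^{⊗2} · P_{φ'}^{⊗2} · M^{⊗2}]. -/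
open Matrix
open scoped Kronecker

noncomputable section

/-!
Since SWAP commutes with every `A ⊗ A` and the projections `P_{ψ'}` are idempotent,
`SWAP_{ψ'} = P_{ψ'}^{⊗2} · SWAP = SWAP · P_{ψ'}^{⊗2}`. The two SWAPs in the left-hand product can
then be brought together across `M^{⊗2}` and cancel (`SWAP² = I`), so the two products already
agree before taking traces.
-/

section Swap

variable {d : ℕ}

lemma swapOp_mul_kronecker (A B : Matrix (Fin d) (Fin d) ℂ) :
    swapOp d * (A ⊗ₖ B) = (B ⊗ₖ A) * swapOp d := by
  ext ⟨i₁, i₂⟩ ⟨j₁, j₂⟩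
  simp only [mul_apply, swapOp, of_apply, kroneckerMap_apply, Fintype.sum_prod_type, ite_and]
  simp [mul_comm]

lemma swapOp_mul_swapOp : swapOp d * swapOp d = 1 := by
  ext ⟨i₁, i₂⟩ ⟨j₁, j₂⟩
  simp only [mul_apply, swapOp, of_apply, Fintype.sum_prod_type, ite_and]
  simp [one_apply, Prod.ext_iff, eq_comm, ite_and]

lemma swapOp_mul_kronecker_mul_swapOp (A B : Matrix (Fin d) (Fin d) ℂ) :
    swapOp d * (A ⊗ₖ B) * swapOp d = B ⊗ₖ A := by
  rw [swapOp_mul_kronecker, mul_assoc, swapOp_mul_swapOp, mul_one]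

end Swap

section Projection

variable {d : ℕ} {ψ : EuclideanSpace ℂ (Fin d)}

lemma ketbra_mul_self_s13 (hψ : ‖ψ‖ = 1) : ketbra ψ * ketbra ψ = ketbra ψ := by
  have hunit : star (ψ : Fin d → ℂ) ⬝ᵥ ψ = 1 := by
    rw [dotProduct_comm, ← EuclideanSpace.inner_eq_star_dotProduct, inner_self_eq_norm_sq_to_K,
      hψ]
    simp
  rw [ketbra, vecMulVec_mul_vecMulVec, hunit, one_smul]

lemma Pperp_mul_self_s13 (hψ : ‖ψ‖ = 1) : Pperp ψ * Pperp ψ = Pperp ψ := by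
  simp only [Pperp, sub_mul, mul_sub, one_mul, mul_one, ketbra_mul_self_s13 hψ]
  abel

lemma kronecker_Pperp_mul_self (hψ : ‖ψ‖ = 1) :
    (Pperp ψ ⊗ₖ Pperp ψ) * (Pperp ψ ⊗ₖ Pperp ψ) = Pperp ψ ⊗ₖ Pperp ψ := by
  rw [← mul_kronecker_mul, Pperp_mul_self_s13 hψ]

lemma swapPerp_eq_kronecker_mul_swapOp (hψ : ‖ψ‖ = 1) :
    swapPerp ψ = (Pperp ψ ⊗ₖ Pperp ψ) * swapOp d := by
  rw [swapPerp, mul_assoc, swapOp_mul_kronecker, ← mul_assoc, kronecker_Pperp_mul_self hψ]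

lemma swapPerp_eq_swapOp_mul_kronecker (hψ : ‖ψ‖ = 1) :
    swapPerp ψ = swapOp d * (Pperp ψ ⊗ₖ Pperp ψ) := by
  rw [swapPerp_eq_kronecker_mul_swapOp hψ, swapOp_mul_kronecker]

end Projection

theorem trace_swapPerp_swapPerp_general {d : ℕ}
    (M : Matrix (Fin d) (Fin d) ℂ)
    (ψ φ : EuclideanSpace ℂ (Fin d)) (hψ : ‖ψ‖ = 1) (hφ : ‖φ‖ = 1) :
    Matrix.trace (swapPerp ψ * (M ⊗ₖ M) * swapPerp φ * (M ⊗ₖ M)) =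
      Matrix.trace ((Pperp ψ ⊗ₖ Pperp ψ) * (M ⊗ₖ M) * (Pperp φ ⊗ₖ Pperp φ) * (M ⊗ₖ M)) := by
  rw [swapPerp_eq_kronecker_mul_swapOp hψ, swapPerp_eq_swapOp_mul_kronecker hφ]
  congr 1
  calc (Pperp ψ ⊗ₖ Pperp ψ) * swapOp d * (M ⊗ₖ M) * (swapOp d * (Pperp φ ⊗ₖ Pperp φ)) * (M ⊗ₖ M)
      = (Pperp ψ ⊗ₖ Pperp ψ) * (swapOp d * (M ⊗ₖ M) * swapOp d) * (Pperp φ ⊗ₖ Pperp φ) *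
          (M ⊗ₖ M) := by simp only [mul_assoc]
    _ = (Pperp ψ ⊗ₖ Pperp ψ) * (M ⊗ₖ M) * (Pperp φ ⊗ₖ Pperp φ) * (M ⊗ₖ M) := by
      rw [swapOp_mul_kronecker_mul_swapOp]

/-- For Hermitian `M` and unit vectors `ψ, φ`:
`Tr[SWAP_{ψ'} M^{⊗2} SWAP_{φ'} M^{⊗2}] = Tr[P_{ψ'}^{⊗2} M^{⊗2} P_{φ'}^{⊗2} M^{⊗2}]`. -/
theorem trace_swapPerp_swapPerp {d : ℕ}
    (M : Matrix (Fin d) (Fin d) ℂ) (hM : M.IsHermitian)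
    (ψ φ : EuclideanSpace ℂ (Fin d)) (hψ : ‖ψ‖ = 1) (hφ : ‖φ‖ = 1) :
    Matrix.trace (swapPerp ψ * (M ⊗ₖ M) * swapPerp φ * (M ⊗ₖ M)) =
      Matrix.trace ((Pperp ψ ⊗ₖ Pperp ψ) * (M ⊗ₖ M) * (Pperp φ ⊗ₖ Pperp φ) * (M ⊗ₖ M)) :=
  trace_swapPerp_swapPerp_general M ψ φ hψ hφ
end
end
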